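/- A pair of maps (δ, ε) with δ: L^(2) → M and ε: L^(2) → 2^N is tree-like if and only if (1) δ is a symbolic ultrametric, (2) ε is a Fitch map, and (3) H(T_δ) ∪ H(T_ε) is a hierarchy on L, where T_δ and T_ε are the respective least-resolved trees. -/

import Mathlib

/-- A rooted phylogenetic tree with leaf set `L`: a finite vertex type `V`,
a root, a parent map (the root is its own parent), every vertex reaches the
root by iterating `parent`, the leaves are exactly the vertices without
children and are in bijection with `L`, and every inner vertex has at least
two children. -/
structure PhyloTree (L : Type) : Type 1 where
  V : Type
  fintypeV : Fintype V
  root : V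
  parent : V → V
  leaf : L → V
  parent_root : parent root = root
  reach : ∀ v : V, ∃ n : ℕ, parent^[n] v = root
  leaf_inj : Function.Injective leaf
  leaf_iff : ∀ v : V, (∀ u : V, parent u = v → u = v) ↔ ∃ x : L, leaf x = v
  phylo : ∀ v : V, (¬ ∃ x : L, leaf x = v) →
      ∃ u u' : V, u ≠ u' ∧ parent u = v ∧ parent u' = v ∧ u ≠ v ∧ u' ≠ v

namespace PhyloTree

variable {L : Type} (T : PhyloTree L)

/-- `v` is an ancestor (or equal) of `w`. -/
def anc (v w : T.V) : Prop := ∃ n : ℕ, T.parent^[n] w = v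

def isLeaf (v : T.V) : Prop := ∃ x : L, T.leaf x = v

/-- The cluster `L(T(v))`: the set of leaves below `v`. -/
def cluster (v : T.V) : Set L := {x : L | T.anc v (T.leaf x)}

/-- The cluster system `H(T)`. -/
def clusters : Set (Set L) := Set.range T.cluster

/-- `w` is the last common ancestor of the leaves `x` and `y`. -/
def isLCA (x y : L) (w : T.V) : Prop :=
  T.anc w (T.leaf x) ∧ T.anc w (T.leaf y) ∧
    ∀ u : T.V, T.anc u (T.leaf x) → T.anc u (T.leaf y) → T.anc u w

/-- `u` is a child of `v`. -/
def childOf (u v : T.V) : Prop := T.parent u = v ∧ u ≠ v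

/-- The edge `{parent u, u}` (encoded by its lower endpoint `u`) is an inner edge. -/
def innerEdge (u : T.V) : Prop := T.parent u ≠ u ∧ ¬ T.isLeaf u

/-- The edge `{parent u, u}` lies on the path from the vertex `w` down to the leaf `y`. -/
def onPath (w : T.V) (y : L) (u : T.V) : Prop :=
  T.anc w u ∧ u ≠ w ∧ T.anc u (T.leaf y)

/-- The vertex-labeled tree `(T,t)` explains `δ`. -/
def ExplainsDelta {M : Type} (t : T.V → M) (δ : L → L → M) : Prop :=
  ∀ x y : L, x ≠ y → ∀ w : T.V, T.isLCA x y w → t w = δ x y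

/-- The edge-labeled tree `(T,λ)` explains `ε`; edge labels are encoded on the
lower endpoint of each edge. -/
def ExplainsEps {N : Type} (lam : T.V → Finset N) (ε : L → L → Finset N) : Prop :=
  ∀ x y : L, x ≠ y → ∀ w : T.V, T.isLCA x y w →
    ∀ k : N, k ∈ ε x y ↔ ∃ u : T.V, T.onPath w y u ∧ k ∈ lam u

/-- The vertex labeling is discriminating: the endpoints of every inner edge
carry distinct labels. -/
def Discriminating {M : Type} (t : T.V → M) : Prop :=
  ∀ u : T.V, T.innerEdge u → t u ≠ t (T.parent u)

/-- Total number of labels over all edges, `Σ_{e ∈ E(T)} |λ(e)|`. -/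
noncomputable def labelSum {N : Type} (lam : T.V → Finset N) : ℕ :=
  letI := T.fintypeV
  letI := Classical.decEq T.V
  ∑ v : T.V, if T.parent v = v then 0 else (lam v).card

/-- Condition (C): every inner vertex has a child joined by an empty-labeled edge. -/
def CondC {N : Type} (lam : T.V → Finset N) : Prop :=
  ∀ v : T.V, ¬ T.isLeaf v → ∃ u : T.V, T.childOf u v ∧ lam u = ∅

/-- Condition (C1): if `t(v) ∈ M₀` then all edges from `v` to its children are empty. -/
def CondC1 {M N : Type} (t : T.V → M) (lam : T.V → Finset N) (M0 : Set M) : Prop :=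
  ∀ v u : T.V, T.childOf u v → t v ∈ M0 → lam u = ∅

/-- Condition (C2): at every vertex, at most one edge to a child is nonempty. -/
def CondC2 {N : Type} (lam : T.V → Finset N) : Prop :=
  ∀ v u u' : T.V, T.childOf u v → T.childOf u' v → lam u ≠ ∅ → lam u' ≠ ∅ → u = u'

/-- `(T1,λ1) ≤ (T2,λ2)`: the edge-labeled tree `(T2,λ2)` refines `(T1,λ1)`. -/
def LeLabeled {N : Type} (T1 : PhyloTree L) (lam1 : T1.V → Finset N)
    (T2 : PhyloTree L) (lam2 : T2.V → Finset N) : Prop :=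
  T1.clusters ⊆ T2.clusters ∧
    ∀ (v1 : T1.V) (v2 : T2.V), T1.parent v1 ≠ v1 → T2.parent v2 ≠ v2 →
      T1.cluster v1 = T2.cluster v2 → lam1 v1 ⊆ lam2 v2

/-- `φ` witnesses that `T'` is obtained from `T` by contracting the inner edge
`{parent u, u}`. -/
def IsContractionMap (T : PhyloTree L) (u : T.V) (T' : PhyloTree L)
    (φ : T.V → T'.V) : Prop :=
  T.innerEdge u ∧ Function.Surjective φ ∧ φ u = φ (T.parent u) ∧
    (∀ a b : T.V, φ a = φ b →
      a = b ∨ (a = u ∧ b = T.parent u) ∨ (b = u ∧ a = T.parent u)) ∧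
    (∀ v : T.V, v ≠ u → T'.parent (φ v) = φ (T.parent v)) ∧
    (∀ x : L, φ (T.leaf x) = T'.leaf x) ∧ φ T.root = T'.root

/-- `T'` is obtained from `T` by contracting the inner edge `{parent u, u}`. -/
def ContractEdge (T : PhyloTree L) (u : T.V) (T' : PhyloTree L) : Prop :=
  ∃ φ : T.V → T'.V, IsContractionMap T u T' φ

/-- Isomorphism of rooted trees on the same leaf set. -/
def Isomorphic (T1 T2 : PhyloTree L) : Prop :=
  ∃ φ : T1.V ≃ T2.V, (∀ v : T1.V, φ (T1.parent v) = T2.parent (φ v)) ∧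
    ∀ x : L, φ (T1.leaf x) = T2.leaf x

def IsSymbolicUltrametric {M : Type} (δ : L → L → M) : Prop :=
  ∃ (T : PhyloTree L) (t : T.V → M), T.ExplainsDelta t δ

def IsFitchMap {N : Type} (ε : L → L → Finset N) : Prop :=
  ∃ (T : PhyloTree L) (lam : T.V → Finset N), T.ExplainsEps lam ε

def TreeLike {M N : Type} (δ : L → L → M) (ε : L → L → Finset N) : Prop :=
  ∃ (T : PhyloTree L) (t : T.V → M) (lam : T.V → Finset N),
    T.ExplainsDelta t δ ∧ T.ExplainsEps lam ε

def MTreeLike {M N : Type} (δ : L → L → M) (ε : L → L → Finset N) (M0 : Set M) : Prop :=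
  ∃ (T : PhyloTree L) (t : T.V → M) (lam : T.V → Finset N),
    T.ExplainsDelta t δ ∧ T.ExplainsEps lam ε ∧ T.CondC lam ∧ T.CondC1 t lam M0

end PhyloTree

/-- A hierarchy on `L`. -/
def IsHierarchy {L : Type} (H : Set (Set L)) : Prop :=
  Set.univ ∈ H ∧ (∀ x : L, {x} ∈ H) ∧
    (∀ A ∈ H, ∀ B ∈ H, A ∩ B = A ∨ A ∩ B = B ∨ A ∩ B = (∅ : Set L)) ∧
    (∅ : Set L) ∉ H

/-!
If one tree `T` explains both maps, the clusters of `T_δ` and of `T_ε` are clusters of `T`, so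
their union is a subfamily of the hierarchy `H(T)`. For `T_ε` this is least-resolvedness. For
`T_δ`, every child cluster of a discriminating tree is a connected component of the graph on the
parent cluster whose edges are the pairs with `δ`-value different from the parent's label, and such
components are clusters of every tree explaining `δ`.

Conversely, contracting the edges of a tree explaining `δ` whose endpoints carry the same label
yields a discriminating tree. Since `k ∈ ε x y` exactly when `k` labels an edge above `y` but
not above `x`, the set `{x | x = y ∨ k ∉ ε x y}` is the cluster below the lowest `k`-labelled
edge above `y` in every tree explaining `ε`; these sets, labelled by the `k` defining them, are
the clusters of a least-resolved tree for `ε`. The tree of the hierarchy `H(T_δ) ∪ H(T_ε)`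
refines both, so it inherits labels explaining `δ` and `ε` at the same time.
-/

theorem Function.exists_last_step_of_iterate_eq {α : Type*} {f : α → α} {a b : α} {n : ℕ}
    (h : f^[n] a = b) (hne : a ≠ b) : ∃ c, f c = b ∧ c ≠ b ∧ ∃ m, f^[m] a = c := by
  induction n with
  | zero => exact absurd h hne
  | succ n ih =>
    rw [Function.iterate_succ_apply'] at h
    by_cases hb : f^[n] a = b
    · exact ih hb
    · exact ⟨_, h, hb, n, rfl⟩

section Hierarchy

variable {L : Type} {H : Set (Set L)} {A B C : Set L}

theorem IsHierarchy.nonempty (hH : IsHierarchy H) (hA : A ∈ H) : A.Nonempty :=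
  Set.nonempty_iff_ne_empty.2 fun h => hH.2.2.2 (h ▸ hA)

theorem IsHierarchy.subset_or_subset (hH : IsHierarchy H) (hA : A ∈ H) (hB : B ∈ H)
    (hAB : (A ∩ B).Nonempty) : A ⊆ B ∨ B ⊆ A := by
  rcases hH.2.2.1 A hA B hB with h | h | h
  · exact Or.inl (Set.inter_eq_left.1 h)
  · exact Or.inr (Set.inter_eq_right.1 h)
  · exact absurd h hAB.ne_empty

theorem IsHierarchy.exists_least_ssuperset [Finite L] (hH : IsHierarchy H) (hC : C ∈ H)
    (hne : C ≠ Set.univ) : ∃ P ∈ H, C ⊂ P ∧ ∀ D ∈ H, C ⊂ D → P ⊆ D := by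
  obtain ⟨P, ⟨hP, hCP⟩, hmin⟩ := Set.exists_min_image {D | D ∈ H ∧ C ⊂ D} Set.ncard
    (Set.toFinite _) ⟨Set.univ, hH.1, Set.ssubset_univ_iff.2 hne⟩
  refine ⟨P, hP, hCP, fun D hD hCD => ?_⟩
  obtain ⟨x, hx⟩ := hH.nonempty hC
  rcases hH.subset_or_subset hP hD ⟨x, hCP.1 hx, hCD.1 hx⟩ with h | h
  · exact h
  · exact (Set.eq_of_subset_of_ncard_le h (hmin D ⟨hD, hCD⟩)).symm.subset

end Hierarchy

namespace PhyloTree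

variable {L : Type}

instance (T : PhyloTree L) : Fintype T.V := T.fintypeV

theorem finite_leaves (T : PhyloTree L) : Finite L := Finite.of_injective T.leaf T.leaf_inj

section Ancestry

variable {T : PhyloTree L} {u v w : T.V}

theorem anc_refl (v : T.V) : T.anc v v := ⟨0, rfl⟩

theorem anc_trans : T.anc u v → T.anc v w → T.anc u w
  | ⟨n, hn⟩, ⟨m, hm⟩ => ⟨n + m, by rw [Function.iterate_add_apply, hm, hn]⟩

theorem anc_parent (v : T.V) : T.anc (T.parent v) v := ⟨1, rfl⟩

theorem anc_of_childOf (h : T.childOf u v) : T.anc v u := h.1 ▸ anc_parent u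

theorem root_anc (v : T.V) : T.anc T.root v := T.reach v

theorem eq_root_of_iterate_eq {k : ℕ} (hk : k ≠ 0) (h : T.parent^[k] v = v) : v = T.root := by
  obtain ⟨d, hd⟩ := T.reach v
  have hper : Function.IsPeriodicPt T.parent (k * d) v :=
    Function.IsPeriodicPt.mul_const (m := k) h d
  calc v = T.parent^[k * d - d] (T.parent^[d] v) := by
        rw [← Function.iterate_add_apply, Nat.sub_add_cancel (Nat.le_mul_of_pos_left d
          (Nat.pos_of_ne_zero hk))]
        exact hper.symm
    _ = T.root := by rw [hd, Function.iterate_fixed T.parent_root]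

theorem anc_antisymm (h₁ : T.anc v w) (h₂ : T.anc w v) : v = w := by
  obtain ⟨n, hn⟩ := h₁
  obtain ⟨m, hm⟩ := h₂
  rcases Nat.eq_zero_or_pos (n + m) with h0 | h0
  · obtain rfl : n = 0 := by omega
    exact hn.symm
  · have hv : T.parent^[n + m] v = v := by rw [Function.iterate_add_apply, hm, hn]
    have hw : T.parent^[m + n] w = w := by rw [Function.iterate_add_apply, hn, hm]
    rw [eq_root_of_iterate_eq (by omega) hv, eq_root_of_iterate_eq (by omega) hw]

theorem anc_total (h₁ : T.anc u w) (h₂ : T.anc v w) : T.anc u v ∨ T.anc v u := by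
  obtain ⟨n, hn⟩ := h₁
  obtain ⟨m, hm⟩ := h₂
  rcases le_total n m with h | h
  · exact Or.inr ⟨m - n, by
      rw [← hn, ← Function.iterate_add_apply, Nat.sub_add_cancel h, hm]⟩
  · exact Or.inl ⟨n - m, by
      rw [← hm, ← Function.iterate_add_apply, Nat.sub_add_cancel h, hn]⟩

theorem parent_eq_self_iff : T.parent v = v ↔ v = T.root :=
  ⟨fun h => eq_root_of_iterate_eq one_ne_zero h, fun h => h ▸ T.parent_root⟩

theorem anc_parent_of_anc_of_ne (h : T.anc u v) (hne : u ≠ v) : T.anc u (T.parent v) := by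
  obtain ⟨_ | n, hn⟩ := h
  · exact absurd hn.symm hne
  · exact ⟨n, by rwa [Function.iterate_succ_apply] at hn⟩

theorem exists_childOf_anc (h : T.anc v w) (hne : w ≠ v) :
    ∃ c, T.childOf c v ∧ T.anc c w := by
  obtain ⟨n, hn⟩ := h
  obtain ⟨c, hc, hcv, m, hm⟩ := Function.exists_last_step_of_iterate_eq hn hne
  exact ⟨c, ⟨hc, hcv⟩, m, hm⟩

theorem eq_of_childOf_of_anc {c c' : T.V} (hc : T.childOf c v) (hc' : T.childOf c' v)
    (h : T.anc c c') : c = c' := by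
  by_contra hne
  have hcv : T.anc c v := hc'.1 ▸ anc_parent_of_anc_of_ne h hne
  exact hc.2 (anc_antisymm (anc_of_childOf hc) hcv).symm

theorem not_isLeaf_of_childOf (h : T.childOf u v) : ¬ T.isLeaf v :=
  fun hv => h.2 ((T.leaf_iff v).2 hv u h.1)

theorem exists_childOf_ne (hv : ¬ T.isLeaf v) (c : T.V) : ∃ c', T.childOf c' v ∧ c' ≠ c := by
  obtain ⟨u, u', hne, hu, hu', huv, hu'v⟩ := T.phylo v hv
  by_cases h : u = c
  · exact ⟨u', ⟨hu', hu'v⟩, h ▸ hne.symm⟩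
  · exact ⟨u, ⟨hu, huv⟩, h⟩

theorem induction_from_root {P : T.V → Prop} (hroot : P T.root)
    (hstep : ∀ v, v ≠ T.root → P (T.parent v) → P v) (v : T.V) : P v := by
  obtain ⟨n, hn⟩ := T.reach v
  induction n generalizing v with
  | zero =>
    obtain rfl : v = T.root := hn
    exact hroot
  | succ n ih =>
    by_cases hv : v = T.root
    · exact hv ▸ hroot
    · exact hstep v hv (ih _ (by rwa [Function.iterate_succ_apply] at hn))

theorem ncard_descendants_lt (h : T.childOf u v) :
    {w | T.anc u w}.ncard < {w | T.anc v w}.ncard :=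
  Set.ncard_lt_ncard ⟨fun _ hw => anc_trans (anc_of_childOf h) hw,
    fun hsub => h.2 (anc_antisymm (anc_of_childOf h) (hsub (anc_refl v))).symm⟩

theorem induction_from_leaves {P : T.V → Prop}
    (hstep : ∀ v, (∀ c, T.childOf c v → P c) → P v) (v : T.V) : P v :=
  (measure fun v => {w | T.anc v w}.ncard).wf.induction v
    fun v ih => hstep v fun c hc => ih c (ncard_descendants_lt hc)

theorem exists_lowest {P : T.V → Prop} (hP : ∀ u, P u → T.anc u w) (hne : ∃ u, P u) :
    ∃ v, P v ∧ ∀ u, P u → T.anc u v := by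
  obtain ⟨v, hv, hmin⟩ :=
    Set.exists_min_image {u | P u} (fun u => {x | T.anc u x}.ncard) (Set.toFinite _) hne
  refine ⟨v, hv, fun u hu => (anc_total (hP u hu) (hP v hv)).elim id fun hvu => ?_⟩
  have heq := Set.eq_of_subset_of_ncard_le (fun _ hx => anc_trans hvu hx) (hmin u hu)
  exact (heq ▸ anc_refl v : v ∈ {x | T.anc u x})

end Ancestry

section Clusters

variable {T : PhyloTree L} {u v w c c' : T.V} {x y z : L}

theorem cluster_mono (h : T.anc v w) : T.cluster w ⊆ T.cluster v :=
  fun _ hx => anc_trans h hx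

theorem cluster_root : T.cluster T.root = Set.univ :=
  Set.eq_univ_of_forall fun x => root_anc (T.leaf x)

theorem cluster_leaf (x : L) : T.cluster (T.leaf x) = {x} := by
  ext y
  refine ⟨fun hy => T.leaf_inj ?_, fun hy => hy ▸ anc_refl _⟩
  by_contra hne
  obtain ⟨c, hc, -⟩ := exists_childOf_anc hy hne
  exact not_isLeaf_of_childOf hc ⟨x, rfl⟩

theorem cluster_nonempty (v : T.V) : (T.cluster v).Nonempty := by
  induction v using induction_from_leaves with
  | hstep v ih =>
    by_cases hv : T.isLeaf v
    · obtain ⟨x, rfl⟩ := hv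
      exact ⟨x, anc_refl _⟩
    · obtain ⟨c, hc, -⟩ := exists_childOf_ne hv v
      exact (ih c hc).mono (cluster_mono (anc_of_childOf hc))

theorem disjoint_cluster_of_childOf (hc : T.childOf c v) (hc' : T.childOf c' v) (hne : c ≠ c') :
    Disjoint (T.cluster c) (T.cluster c') :=
  Set.disjoint_left.2 fun _ hx hx' => hne <| (anc_total hx hx').elim
    (eq_of_childOf_of_anc hc hc') fun h => (eq_of_childOf_of_anc hc' hc h).symm

theorem exists_childOf_mem (hv : ¬ T.isLeaf v) (hx : x ∈ T.cluster v) :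
    ∃ c, T.childOf c v ∧ x ∈ T.cluster c :=
  exists_childOf_anc hx fun h => hv ⟨x, h⟩

theorem cluster_injective : Function.Injective T.cluster := by
  have key : ∀ {v w : T.V}, T.cluster v = T.cluster w → T.anc v w → v = w := by
    intro v w h hvw
    by_contra hne
    obtain ⟨c, hc, hcw⟩ := exists_childOf_anc hvw (Ne.symm hne)
    obtain ⟨c', hc', hc'c⟩ := exists_childOf_ne (not_isLeaf_of_childOf hc) c
    obtain ⟨z, hz⟩ := cluster_nonempty c'
    have hzw : z ∈ T.cluster w := h ▸ cluster_mono (anc_of_childOf hc') hz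
    exact Set.disjoint_left.1 (disjoint_cluster_of_childOf hc' hc hc'c) hz (cluster_mono hcw hzw)
  intro v w h
  obtain ⟨x, hx⟩ := cluster_nonempty v
  exact (anc_total hx (h ▸ hx : x ∈ T.cluster w)).elim (key h) fun hwv => (key h.symm hwv).symm

theorem cluster_subset_iff : T.cluster v ⊆ T.cluster w ↔ T.anc w v := by
  refine ⟨fun h => ?_, cluster_mono⟩
  obtain ⟨x, hx⟩ := cluster_nonempty v
  refine (anc_total (h hx) hx).elim id fun hvw => ?_
  obtain rfl := cluster_injective (h.antisymm (cluster_mono hvw))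
  exact anc_refl v

theorem isHierarchy_of_subset_clusters {H : Set (Set L)} (hH : H ⊆ T.clusters)
    (huniv : Set.univ ∈ H) (hsingle : ∀ x, {x} ∈ H) : IsHierarchy H := by
  refine ⟨huniv, hsingle, fun A hA B hB => ?_, fun h => ?_⟩
  · obtain ⟨v, rfl⟩ := hH hA
    obtain ⟨w, rfl⟩ := hH hB
    by_cases hvw : Disjoint (T.cluster v) (T.cluster w)
    · exact Or.inr (Or.inr (Set.disjoint_iff_inter_eq_empty.1 hvw))
    obtain ⟨x, hxv, hxw⟩ := Set.not_disjoint_iff.1 hvw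
    rcases anc_total hxv hxw with h | h
    · exact Or.inr (Or.inl (Set.inter_eq_right.2 (cluster_mono h)))
    · exact Or.inl (Set.inter_eq_left.2 (cluster_mono h))
  · obtain ⟨v, hv⟩ := hH h
    exact (cluster_nonempty v).ne_empty hv

end Clusters

section LCA

variable {T : PhyloTree L} {u v w c : T.V} {x y z : L}

open Classical in
/-- A junk value when `C = ∅`, which lies in every cluster. -/
noncomputable def lcaSet (T : PhyloTree L) (C : Set L) : T.V :=
  if h : ∃ w, C ⊆ T.cluster w ∧ ∀ u, C ⊆ T.cluster u → T.anc u w then h.choose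
  else T.root

theorem lcaSet_spec {C : Set L} (hC : C.Nonempty) :
    C ⊆ T.cluster (T.lcaSet C) ∧ ∀ u, C ⊆ T.cluster u → T.anc u (T.lcaSet C) := by
  obtain ⟨x, hx⟩ := hC
  have h : ∃ w, C ⊆ T.cluster w ∧ ∀ u, C ⊆ T.cluster u → T.anc u w :=
    exists_lowest (w := T.leaf x) (fun u hu => hu hx)
      ⟨T.root, cluster_root (T := T) ▸ Set.subset_univ C⟩
  unfold lcaSet
  rw [dif_pos h]
  exact h.choose_spec

theorem lcaSet_eq {C : Set L} (hC : C ⊆ T.cluster w)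
    (hmin : ∀ u, C ⊆ T.cluster u → T.anc u w) : T.lcaSet C = w := by
  have h : ∃ w, C ⊆ T.cluster w ∧ ∀ u, C ⊆ T.cluster u → T.anc u w := ⟨w, hC, hmin⟩
  unfold lcaSet
  rw [dif_pos h]
  exact anc_antisymm (hmin _ h.choose_spec.1) (h.choose_spec.2 w hC)

theorem lcaSet_cluster (v : T.V) : T.lcaSet (T.cluster v) = v :=
  lcaSet_eq subset_rfl fun _ hu => cluster_subset_iff.1 hu

theorem isLCA_lcaSet (x y : L) : T.isLCA x y (T.lcaSet {x, y}) := by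
  obtain ⟨hsub, hmin⟩ := lcaSet_spec (T := T) (Set.insert_nonempty x {y})
  obtain ⟨hx, hy⟩ := Set.pair_subset_iff.1 hsub
  exact ⟨hx, hy, fun u hxu hyu => hmin u (Set.pair_subset_iff.2 ⟨hxu, hyu⟩)⟩

theorem isLCA_iff : T.isLCA x y w ↔
    x ∈ T.cluster w ∧ y ∈ T.cluster w ∧
      ∀ u, x ∈ T.cluster u → y ∈ T.cluster u → T.cluster w ⊆ T.cluster u := by
  simp only [cluster_subset_iff]
  rfl

theorem isLCA_of_childOf (hc : T.childOf c v) (hx : x ∈ T.cluster c) (hz : z ∈ T.cluster v)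
    (hzc : z ∉ T.cluster c) : T.isLCA x z v := by
  refine ⟨cluster_mono (anc_of_childOf hc) hx, hz, fun u hxu hzu => ?_⟩
  rcases anc_total hxu hx with h | h
  · have hne : u ≠ c := fun e => hzc (e ▸ hzu)
    exact hc.1 ▸ anc_parent_of_anc_of_ne h hne
  · exact absurd (cluster_mono h hzu) hzc

theorem onPath_iff_of_isLCA (hw : T.isLCA x y w) :
    T.onPath w y u ↔ y ∈ T.cluster u ∧ x ∉ T.cluster u := by
  refine ⟨fun ⟨hwu, hne, hy⟩ => ⟨hy, fun hx => hne (anc_antisymm (hw.2.2 u hx hy) hwu)⟩,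
    fun ⟨hy, hx⟩ => ?_⟩
  rcases anc_total hy hw.2.1 with h | h
  · exact absurd (cluster_mono h hw.1) hx
  · exact ⟨h, fun e => hx (e ▸ hw.1), hy⟩

theorem ExplainsEps.mem_iff {N : Type} {lam : T.V → Finset N} {ε : L → L → Finset N}
    (hε : T.ExplainsEps lam ε) (hxy : x ≠ y) {k : N} :
    k ∈ ε x y ↔ ∃ u, y ∈ T.cluster u ∧ x ∉ T.cluster u ∧ k ∈ lam u := by
  simp only [hε x y hxy _ (isLCA_lcaSet x y), onPath_iff_of_isLCA (isLCA_lcaSet x y),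
    and_assoc]

end LCA

section OfHierarchy

variable {L : Type} {H : Set (Set L)} {C D P : Set L}

open Classical in
noncomputable def parentSet (H : Set (Set L)) (C : Set L) : Set L :=
  if h : ∃ P ∈ H, C ⊂ P ∧ ∀ D ∈ H, C ⊂ D → P ⊆ D then h.choose else C

theorem subset_parentSet (H : Set (Set L)) (C : Set L) : C ⊆ parentSet H C := by
  unfold parentSet
  split_ifs with h
  exacts [h.choose_spec.2.1.1, subset_rfl]

theorem parentSet_mem (hC : C ∈ H) : parentSet H C ∈ H := by
  unfold parentSet
  split_ifs with h
  exacts [h.choose_spec.1, hC]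

theorem parentSet_univ : parentSet H Set.univ = Set.univ := by
  unfold parentSet
  rw [dif_neg]
  rintro ⟨P, -, hP, -⟩
  exact hP.2 (Set.subset_univ P)

theorem parentSet_spec [Finite L] (hH : IsHierarchy H) (hC : C ∈ H) (hne : C ≠ Set.univ) :
    C ⊂ parentSet H C ∧ ∀ D ∈ H, C ⊂ D → parentSet H C ⊆ D := by
  have h := hH.exists_least_ssuperset hC hne
  unfold parentSet
  rw [dif_pos h]
  exact h.choose_spec.2

theorem parentSet_eq [Finite L] (hH : IsHierarchy H) (hC : C ∈ H) (hP : P ∈ H) (hCP : C ⊂ P)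
    (hleast : ∀ D ∈ H, C ⊂ D → P ⊆ D) : parentSet H C = P := by
  obtain ⟨hss, hmin⟩ := parentSet_spec hH hC fun e => hCP.2 (e ▸ Set.subset_univ P)
  exact (hmin P hP hCP).antisymm (hleast _ (parentSet_mem hC) hss)

noncomputable def parentIn (H : Set (Set L)) (C : {C // C ∈ H}) : {C // C ∈ H} :=
  ⟨parentSet H C.1, parentSet_mem C.2⟩

theorem val_iterate_parentIn (n : ℕ) (C : {C // C ∈ H}) :
    ((parentIn H)^[n] C).1 = (parentSet H)^[n] C.1 :=
  Function.Semiconj.iterate_right (f := Subtype.val) (fun _ => rfl) n C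

theorem subset_iterate_parentSet (n : ℕ) (C : Set L) : C ⊆ (parentSet H)^[n] C := by
  induction n with
  | zero => exact subset_rfl
  | succ n ih =>
    rw [Function.iterate_succ_apply']
    exact ih.trans (subset_parentSet H _)

theorem exists_iterate_parentIn [Finite L] (hH : IsHierarchy H) {C D : {C // C ∈ H}}
    (h : C.1 ⊆ D.1) : ∃ n, (parentIn H)^[n] C = D := by
  by_cases hCD : C = D
  · exact ⟨0, hCD⟩
  have hss : C.1 ⊂ D.1 := h.ssubset_of_ne fun e => hCD (Subtype.ext e)
  obtain ⟨hP, hleast⟩ := parentSet_spec hH C.2 fun e => hss.2 (e ▸ Set.subset_univ D.1)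
  have hgrow := Set.ncard_lt_ncard hP
  have hbound := Set.ncard_le_ncard (hleast D.1 D.2 hss)
  obtain ⟨n, hn⟩ := exists_iterate_parentIn hH (C := parentIn H C) (hleast D.1 D.2 hss)
  exact ⟨n + 1, by rwa [Function.iterate_succ_apply]⟩
termination_by D.1.ncard - C.1.ncard
decreasing_by
  simp only [parentIn]
  omega

theorem exists_parentIn_eq [Finite L] (hH : IsHierarchy H) {v : {C // C ∈ H}} {x : L}
    (hx : x ∈ v.1) (hne : v.1 ≠ {x}) : ∃ u, parentIn H u = v ∧ u ≠ v ∧ x ∈ u.1 := by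
  obtain ⟨n, hn⟩ := exists_iterate_parentIn hH (C := ⟨{x}, hH.2.1 x⟩) (D := v)
    (Set.singleton_subset_iff.2 hx)
  obtain ⟨u, hu, huv, m, hm⟩ :=
    Function.exists_last_step_of_iterate_eq hn fun e => hne (congrArg Subtype.val e).symm
  refine ⟨u, hu, huv, ?_⟩
  rw [← hm, val_iterate_parentIn]
  exact subset_iterate_parentSet m {x} rfl

noncomputable def ofHierarchy [Finite L] (H : Set (Set L)) (hH : IsHierarchy H) :
    PhyloTree L where
  V := {C // C ∈ H}
  fintypeV := Fintype.ofFinite _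
  root := ⟨Set.univ, hH.1⟩
  parent := parentIn H
  leaf x := ⟨{x}, hH.2.1 x⟩
  parent_root := Subtype.ext parentSet_univ
  reach _ := exists_iterate_parentIn hH (Set.subset_univ _)
  leaf_inj _ _ h := Set.singleton_injective (congrArg Subtype.val h)
  leaf_iff v := by
    constructor
    · intro hv
      by_contra hns
      obtain ⟨x, hx⟩ := hH.nonempty v.2
      obtain ⟨u, hu, huv, -⟩ :=
        exists_parentIn_eq hH hx fun e => hns ⟨x, Subtype.ext e.symm⟩
      exact huv (hv u hu)
    · rintro ⟨x, rfl⟩ u hu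
      have hsub : u.1 ⊆ {x} := by
        have h : parentSet H u.1 = {x} := congrArg Subtype.val hu
        exact h ▸ subset_parentSet H u.1
      exact Subtype.ext ((hH.nonempty u.2).subset_singleton_iff.1 hsub)
  phylo v hv := by
    have hvx : ∀ z, v.1 ≠ {z} := fun z e => hv ⟨z, Subtype.ext e.symm⟩
    obtain ⟨x, hx⟩ := hH.nonempty v.2
    obtain ⟨u, hu, huv, hxu⟩ := exists_parentIn_eq hH hx (hvx x)
    have hsub : u.1 ⊆ v.1 := by
      have h : parentSet H u.1 = v.1 := congrArg Subtype.val hu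
      exact h ▸ subset_parentSet H u.1
    obtain ⟨y, hyv, hyu⟩ := Set.not_subset.1 fun h => huv (Subtype.ext (hsub.antisymm h))
    obtain ⟨u', hu', hu'v, hyu'⟩ := exists_parentIn_eq hH hyv (hvx y)
    exact ⟨u, u', fun e => hyu (e ▸ hyu'), hu, hu', huv, hu'v⟩

variable [Finite L] (hH : IsHierarchy H)

theorem ofHierarchy_anc_iff {v w : (ofHierarchy H hH).V} :
    (ofHierarchy H hH).anc v w ↔ w.1 ⊆ v.1 := by
  refine ⟨fun ⟨n, hn⟩ => ?_, exists_iterate_parentIn hH⟩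
  rw [← hn]
  exact (val_iterate_parentIn n w).symm ▸ subset_iterate_parentSet n w.1

theorem ofHierarchy_cluster (v : (ofHierarchy H hH).V) : (ofHierarchy H hH).cluster v = v.1 :=
  Set.ext fun _ => (ofHierarchy_anc_iff hH).trans Set.singleton_subset_iff

theorem ofHierarchy_clusters : (ofHierarchy H hH).clusters = H := by
  ext C
  exact ⟨fun ⟨v, hv⟩ => hv ▸ (ofHierarchy_cluster hH v).symm ▸ v.2,
    fun hC => ⟨⟨C, hC⟩, ofHierarchy_cluster hH ⟨C, hC⟩⟩⟩

end OfHierarchy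

section Components

variable {L M : Type} {δ : L → L → M} {C D : Set L} {m : M} {x y : L}

def DiffAdj (δ : L → L → M) (C : Set L) (m : M) (a b : L) : Prop :=
  a ∈ C ∧ b ∈ C ∧ δ a b ≠ m

def diffComponent (δ : L → L → M) (C : Set L) (m : M) (x : L) : Set L :=
  {y | Relation.ReflTransGen (DiffAdj δ C m) x y}

theorem mem_diffComponent_self : x ∈ diffComponent δ C m x := Relation.ReflTransGen.refl

theorem diffComponent_subset (hx : x ∈ C) : diffComponent δ C m x ⊆ C := by
  intro y hy
  induction hy with
  | refl => exact hx
  | tail _ hab _ => exact hab.2.1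

theorem diffComponent_eq_of_subset (hDC : D ⊆ C) (hsub : diffComponent δ C m x ⊆ D) :
    diffComponent δ C m x = diffComponent δ D m x := by
  refine Set.Subset.antisymm (fun y hy => ?_) fun y hy =>
    Relation.ReflTransGen.mono (fun _ _ hab => ⟨hDC hab.1, hDC hab.2.1, hab.2.2⟩) _ _ hy
  induction hy with
  | refl => exact Relation.ReflTransGen.refl
  | tail hxa hab ih => exact ih.tail ⟨hsub hxa, hsub (hxa.tail hab), hab.2.2⟩

variable {T : PhyloTree L} {t : T.V → M} {c v : T.V}

theorem delta_eq_of_childOf (hδ : T.ExplainsDelta t δ) (hc : T.childOf c v)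
    (hx : x ∈ T.cluster c) (hy : y ∈ T.cluster v) (hyc : y ∉ T.cluster c) : δ x y = t v :=
  (hδ x y (fun e => hyc (e ▸ hx)) v (isLCA_of_childOf hc hx hy hyc)).symm

theorem diffAdj_of_childOf (hδ : T.ExplainsDelta t δ) (hc : T.childOf c v)
    (hvC : T.cluster v ⊆ C) (hm : t v ≠ m) (hx : x ∈ T.cluster c) (hy : y ∈ T.cluster v)
    (hyc : y ∉ T.cluster c) : DiffAdj δ C m x y :=
  ⟨hvC (cluster_mono (anc_of_childOf hc) hx), hvC hy,
    (delta_eq_of_childOf hδ hc hx hy hyc).trans_ne hm⟩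

theorem diffComponent_subset_cluster (hδ : T.ExplainsDelta t δ) (hc : T.childOf c v)
    (hx : x ∈ T.cluster c) : diffComponent δ (T.cluster v) (t v) x ⊆ T.cluster c := by
  intro y hy
  induction hy with
  | refl => exact hx
  | tail _ hab ih =>
    by_contra hb
    exact hab.2.2 (delta_eq_of_childOf hδ hc ih hab.2.1 hb)

theorem cluster_subset_diffComponent (hδ : T.ExplainsDelta t δ) (hv : ¬ T.isLeaf v)
    (hvC : T.cluster v ⊆ C) (hm : t v ≠ m) (hx : x ∈ T.cluster v) :
    T.cluster v ⊆ diffComponent δ C m x := by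
  intro y hy
  obtain ⟨c, hc, hxc⟩ := exists_childOf_mem hv hx
  by_cases hyc : y ∈ T.cluster c
  · obtain ⟨c', hc', hne⟩ := exists_childOf_ne hv c
    obtain ⟨z, hz⟩ := cluster_nonempty c'
    have hdisj := disjoint_cluster_of_childOf hc' hc hne
    have hzv := cluster_mono (anc_of_childOf hc') hz
    exact (Relation.ReflTransGen.single
      (diffAdj_of_childOf hδ hc hvC hm hxc hzv (Set.disjoint_left.1 hdisj hz))).tail
      (diffAdj_of_childOf hδ hc' hvC hm hz hy (Set.disjoint_right.1 hdisj hyc))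
  · exact Relation.ReflTransGen.single (diffAdj_of_childOf hδ hc hvC hm hxc hy hyc)

theorem diffComponent_mem_clusters (hδ : T.ExplainsDelta t δ) (m : M) (v : T.V) :
    ∀ x ∈ T.cluster v, diffComponent δ (T.cluster v) m x ∈ T.clusters := by
  induction v using induction_from_leaves with
  | hstep v ih =>
    intro x hx
    by_cases hv : T.isLeaf v
    · obtain ⟨z, rfl⟩ := hv
      refine ⟨T.leaf z, Set.Subset.antisymm (fun y hy => ?_) (diffComponent_subset hx)⟩
      rw [cluster_leaf] at hx hy
      obtain rfl : y = z := hy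
      obtain rfl : x = y := hx
      exact mem_diffComponent_self
    by_cases hm : t v = m
    · subst hm
      obtain ⟨c, hc, hxc⟩ := exists_childOf_mem hv hx
      rw [diffComponent_eq_of_subset (cluster_mono (anc_of_childOf hc))
        (diffComponent_subset_cluster hδ hc hxc)]
      exact ih c hc x hxc
    · exact ⟨v, (cluster_subset_diffComponent hδ hv subset_rfl hm hx).antisymm
        (diffComponent_subset hx)⟩

theorem cluster_eq_diffComponent (hδ : T.ExplainsDelta t δ) (hdisc : T.Discriminating t)
    (hc : T.childOf c v) (hx : x ∈ T.cluster c) :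
    T.cluster c = diffComponent δ (T.cluster v) (t v) x := by
  refine Set.Subset.antisymm ?_ (diffComponent_subset_cluster hδ hc hx)
  by_cases hleaf : T.isLeaf c
  · obtain ⟨z, rfl⟩ := hleaf
    rw [cluster_leaf] at hx ⊢
    obtain rfl : x = z := hx
    exact Set.singleton_subset_iff.2 mem_diffComponent_self
  · have hm := hdisc c ⟨by rw [hc.1]; exact hc.2.symm, hleaf⟩
    rw [hc.1] at hm
    exact cluster_subset_diffComponent hδ hleaf (cluster_mono (anc_of_childOf hc)) hm hx

theorem clusters_subset_of_discriminating {Td : PhyloTree L} {td : Td.V → M}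
    (hδd : Td.ExplainsDelta td δ) (hdisc : Td.Discriminating td) (hδ : T.ExplainsDelta t δ) :
    Td.clusters ⊆ T.clusters := by
  rintro _ ⟨v, rfl⟩
  induction v using induction_from_root with
  | hroot => exact ⟨T.root, by rw [cluster_root, cluster_root]⟩
  | hstep v hv ih =>
    obtain ⟨w, hw⟩ := ih
    obtain ⟨x, hx⟩ := cluster_nonempty v
    have hc : Td.childOf v (Td.parent v) := ⟨rfl, fun e => hv (parent_eq_self_iff.1 e.symm)⟩
    have hxw : x ∈ T.cluster w := hw ▸ cluster_mono (anc_of_childOf hc) hx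
    rw [cluster_eq_diffComponent hδd hdisc hc hx, ← hw]
    exact diffComponent_mem_clusters hδ _ w x hxw

end Components

section Contraction

variable {L M : Type} {T : PhyloTree L} {t : T.V → M} {δ : L → L → M}

def Contractible (T : PhyloTree L) (t : T.V → M) (v : T.V) : Prop :=
  T.innerEdge v ∧ t v = t (T.parent v)

theorem exists_uncontractible_anc (t : T.V → M) (v : T.V) :
    ∃ r, T.anc r v ∧ ¬ T.Contractible t r ∧ t r = t v ∧
      ∀ u, T.anc u v → ¬ T.Contractible t u → T.anc u r := by
  induction v using induction_from_root with
  | hroot => exact ⟨T.root, anc_refl _, fun h => h.1.1 T.parent_root, rfl, fun u hu _ => hu⟩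
  | hstep v _ ih =>
    by_cases hcv : T.Contractible t v
    · obtain ⟨r, hr, hrc, htr, hmax⟩ := ih
      exact ⟨r, anc_trans hr (anc_parent v), hrc, htr.trans hcv.2.symm, fun u hu huc =>
        hmax u (anc_parent_of_anc_of_ne hu fun e => huc (e ▸ hcv)) huc⟩
    · exact ⟨v, anc_refl v, hcv, rfl, fun u hu _ => hu⟩

/-- The clusters of the tree obtained by contracting all contractible edges. -/
def discClusters (T : PhyloTree L) (t : T.V → M) : Set (Set L) :=
  T.cluster '' {v | ¬ T.Contractible t v}

theorem isHierarchy_discClusters : IsHierarchy (discClusters T t) :=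
  isHierarchy_of_subset_clusters (Set.image_subset_range _ _)
    ⟨T.root, fun h => h.1.1 T.parent_root, cluster_root⟩
    fun x => ⟨T.leaf x, fun h => h.1.2 ⟨x, rfl⟩, cluster_leaf x⟩

variable [Finite L]

theorem ofHierarchy_discClusters_explainsDelta (hδ : T.ExplainsDelta t δ) :
    (ofHierarchy _ (isHierarchy_discClusters (t := t))).ExplainsDelta
      (fun u => t (T.lcaSet u.1)) δ := by
  intro x y hxy W hW
  rw [isLCA_iff] at hW
  simp only [ofHierarchy_cluster] at hW
  obtain ⟨hxW, hyW, hWmin⟩ := hW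
  obtain ⟨a, ha, haW⟩ := W.2
  have hw := isLCA_lcaSet (T := T) x y
  obtain ⟨r, hrw, hr, htr, hmax⟩ := exists_uncontractible_anc t (T.lcaSet {x, y})
  have hra : r = a := by
    refine cluster_injective (Set.Subset.antisymm ?_ ?_)
    · rw [← haW] at hxW hyW
      exact cluster_subset_iff.2 (hmax a (hw.2.2 a hxW hyW) ha)
    · rw [haW]
      exact hWmin ⟨T.cluster r, r, hr, rfl⟩ (cluster_mono hrw hw.1) (cluster_mono hrw hw.2.1)
  change t (T.lcaSet W.1) = δ x y
  rw [← haW, lcaSet_cluster, ← hra, htr, hδ x y hxy _ hw]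

theorem ofHierarchy_discClusters_discriminating :
    (ofHierarchy _ (isHierarchy_discClusters (t := t))).Discriminating
      (fun u => t (T.lcaSet u.1)) := by
  rintro ⟨_, a, ha, rfl⟩ ⟨hroot, hleaf⟩
  have hinner : T.innerEdge a := by
    refine ⟨fun e => hroot (Subtype.ext ?_), fun ⟨x, hx⟩ => hleaf ⟨x, Subtype.ext ?_⟩⟩
    · change parentSet _ (T.cluster a) = T.cluster a
      rw [parent_eq_self_iff.1 e, cluster_root, parentSet_univ]
    · change {x} = T.cluster a
      rw [← hx, cluster_leaf]
  obtain ⟨r, hr, hrc, htr, hmax⟩ := exists_uncontractible_anc t (T.parent a)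
  have hpar : parentSet (discClusters T t) (T.cluster a) = T.cluster r := by
    refine parentSet_eq isHierarchy_discClusters ⟨a, ha, rfl⟩ ⟨r, hrc, rfl⟩ ?_ ?_
    · refine (cluster_mono (anc_trans hr (anc_parent a))).ssubset_of_ne fun e => hinner.1 ?_
      obtain rfl := cluster_injective e
      exact anc_antisymm (anc_parent a) hr
    · rintro _ ⟨b, hb, rfl⟩ hab
      have hba : b ≠ a := fun e => hab.2 (by rw [e])
      exact cluster_subset_iff.2
        (hmax b (anc_parent_of_anc_of_ne (cluster_subset_iff.1 hab.1) hba) hb)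
  change t (T.lcaSet (T.cluster a)) ≠ t (T.lcaSet (parentSet _ (T.cluster a)))
  rw [hpar, lcaSet_cluster, lcaSet_cluster, htr]
  exact fun e => ha ⟨hinner, e⟩

theorem exists_discriminating (hδ : T.ExplainsDelta t δ) :
    ∃ (Td : PhyloTree L) (td : Td.V → M), Td.ExplainsDelta td δ ∧ Td.Discriminating td :=
  ⟨_, _, ofHierarchy_discClusters_explainsDelta hδ, ofHierarchy_discClusters_discriminating⟩

end Contraction

theorem ExplainsDelta.of_clusters_subset {L M : Type} {T T' : PhyloTree L} {t : T.V → M}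
    {δ : L → L → M} (hδ : T.ExplainsDelta t δ) (h : T.clusters ⊆ T'.clusters) :
    T'.ExplainsDelta (fun u => t (T.lcaSet (T'.cluster u))) δ := by
  intro x y hxy w' hw'
  have hw := isLCA_lcaSet (T := T) x y
  obtain ⟨u', hu'⟩ := h ⟨T.lcaSet {x, y}, rfl⟩
  rw [isLCA_iff] at hw'
  have hsub := hw'.2.2 u' (hu' ▸ hw.1) (hu' ▸ hw.2.1)
  rw [hu'] at hsub
  change t (T.lcaSet (T'.cluster w')) = δ x y
  rw [lcaSet_eq hsub fun u hu => hw.2.2 u (hu hw'.1) (hu hw'.2.1)]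
  exact hδ x y hxy _ hw

section Fitch

variable {L N : Type} {T : PhyloTree L} {lam : T.V → Finset N} {ε : L → L → Finset N}
  {k : N} {y : L}

def fitchCluster (ε : L → L → Finset N) (k : N) (y : L) : Set L := {x | x = y ∨ k ∉ ε x y}

def fitchClusters (ε : L → L → Finset N) : Set (Set L) :=
  {C | C = Set.univ ∨ (∃ x, C = {x}) ∨ ∃ k y, C = fitchCluster ε k y}

theorem fitchCluster_eq (hε : T.ExplainsEps lam ε) :
    fitchCluster ε k y = {x | ∀ u, y ∈ T.cluster u → k ∈ lam u → x ∈ T.cluster u} := by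
  ext x
  by_cases hxy : x = y
  · subst hxy
    exact iff_of_true (Or.inl rfl) fun _ hu _ => hu
  · simp only [fitchCluster, Set.mem_ofPred_eq, hxy, false_or, hε.mem_iff hxy, not_exists,
      not_and]
    exact forall_congr' fun u => imp_congr_right fun _ => not_imp_not

theorem exists_cluster_eq_fitchCluster (hε : T.ExplainsEps lam ε) (k : N) (y : L) :
    ∃ v, T.cluster v = fitchCluster ε k y ∧ (v ≠ T.root → k ∈ lam v) := by
  rw [fitchCluster_eq hε]
  by_cases h : ∃ u, y ∈ T.cluster u ∧ k ∈ lam u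
  · obtain ⟨v, ⟨hyv, hkv⟩, hlow⟩ := exists_lowest (w := T.leaf y) (fun u hu => hu.1) h
    exact ⟨v, Set.ext fun x => ⟨fun hx u hyu hku => cluster_mono (hlow u ⟨hyu, hku⟩) hx,
      fun hx => hx v hyv hkv⟩, fun _ => hkv⟩
  · refine ⟨T.root, ?_, fun h' => absurd rfl h'⟩
    rw [cluster_root]
    exact (Set.eq_univ_of_forall fun x u hyu hku => absurd ⟨u, hyu, hku⟩ h).symm

theorem fitchCluster_mem_clusters (hε : T.ExplainsEps lam ε) (k : N) (y : L) :
    fitchCluster ε k y ∈ T.clusters :=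
  let ⟨v, hv, _⟩ := exists_cluster_eq_fitchCluster hε k y
  ⟨v, hv⟩

theorem fitchClusters_subset (hε : T.ExplainsEps lam ε) : fitchClusters ε ⊆ T.clusters := by
  rintro C (rfl | ⟨x, rfl⟩ | ⟨k, y, rfl⟩)
  exacts [⟨T.root, cluster_root⟩, ⟨T.leaf x, cluster_leaf x⟩,
    fitchCluster_mem_clusters hε k y]

theorem isHierarchy_fitchClusters (hε : T.ExplainsEps lam ε) : IsHierarchy (fitchClusters ε) :=
  isHierarchy_of_subset_clusters (fitchClusters_subset hε) (Or.inl rfl)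
    fun x => Or.inr (Or.inl ⟨x, rfl⟩)

variable [Fintype L]

open Classical in
/-- Intersecting with the values of `ε` only makes this a `Finset`; it loses nothing when
`C ≠ univ`. -/
noncomputable def fitchLabel (ε : L → L → Finset N) (C : Set L) : Finset N :=
  (Finset.univ.biUnion fun p : L × L => ε p.1 p.2).filter fun k => ∃ y, fitchCluster ε k y = C

theorem mem_fitchLabel {C : Set L} :
    k ∈ fitchLabel ε C ↔ (∃ x y, k ∈ ε x y) ∧ ∃ y, fitchCluster ε k y = C := by
  simp [fitchLabel]

theorem fitchLabel_subset (hε : T.ExplainsEps lam ε) {v : T.V} (hv : v ≠ T.root) :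
    fitchLabel ε (T.cluster v) ⊆ lam v := by
  intro k hk
  obtain ⟨-, y, hy⟩ := mem_fitchLabel.1 hk
  obtain ⟨v', hv', hk'⟩ := exists_cluster_eq_fitchCluster hε k y
  obtain rfl := cluster_injective (hv'.trans hy)
  exact hk' hv

theorem explainsEps_fitchLabel (hε : T.ExplainsEps lam ε) {T' : PhyloTree L}
    (h : ∀ k y, fitchCluster ε k y ∈ T'.clusters) :
    T'.ExplainsEps (fun u => fitchLabel ε (T'.cluster u)) ε := by
  intro x y hxy w hw k
  simp only [onPath_iff_of_isLCA hw, and_assoc]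
  constructor
  · intro hk
    obtain ⟨u, hu⟩ := h k y
    refine ⟨u, hu ▸ Or.inl rfl, ?_, hu ▸ mem_fitchLabel.2 ⟨⟨x, y, hk⟩, y, rfl⟩⟩
    rw [hu]
    rintro (e | e)
    exacts [hxy e, e hk]
  · rintro ⟨u, hyu, hxu, hk⟩
    obtain ⟨-, y', hy'⟩ := mem_fitchLabel.1 hk
    obtain ⟨v, hv, hkv⟩ := exists_cluster_eq_fitchCluster hε k y'
    rw [← hy', ← hv] at hyu hxu
    refine (hε.mem_iff hxy).2 ⟨v, hyu, hxu, hkv fun e => hxu ?_⟩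
    rw [e, cluster_root]
    trivial

theorem exists_leastResolved (hε : T.ExplainsEps lam ε) :
    ∃ (Tε : PhyloTree L) (lamε : Tε.V → Finset N), Tε.ExplainsEps lamε ε ∧
      ∀ (T' : PhyloTree L) (lam' : T'.V → Finset N), T'.ExplainsEps lam' ε →
        LeLabeled Tε lamε T' lam' := by
  set Tε := ofHierarchy _ (isHierarchy_fitchClusters hε)
  have hclusters : Tε.clusters = fitchClusters ε := ofHierarchy_clusters _
  refine ⟨Tε, fun u => fitchLabel ε (Tε.cluster u), explainsEps_fitchLabel hε fun k y => ?_,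
    fun T' lam' hε' =>
      ⟨hclusters ▸ fitchClusters_subset hε', fun v₁ v₂ _ hv₂ hcl => ?_⟩⟩
  · exact hclusters ▸ Or.inr (Or.inr ⟨k, y, rfl⟩)
  · change fitchLabel ε (Tε.cluster v₁) ⊆ lam' v₂
    rw [hcl]
    exact fitchLabel_subset hε' fun e => hv₂ (e ▸ T'.parent_root)

end Fitch

end PhyloTree

/-- `(δ,ε)` is tree-like iff `δ` is a symbolic ultrametric,
`ε` is a Fitch map, and `H(T_δ) ∪ H(T_ε)` is a hierarchy, where `(T_δ,t_δ)` is
the discriminating least-resolved tree for `δ` and `(T_ε,λ_ε)` the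
least-resolved tree for `ε`. -/
theorem statement9 {L M N : Type} (δ : L → L → M) (ε : L → L → Finset N) :
    PhyloTree.TreeLike δ ε ↔
      (PhyloTree.IsSymbolicUltrametric δ ∧ PhyloTree.IsFitchMap ε ∧
        ∀ (Tδ : PhyloTree L) (tδ : Tδ.V → M) (Tε : PhyloTree L)
          (lamε : Tε.V → Finset N),
          Tδ.ExplainsDelta tδ δ → Tδ.Discriminating tδ →
          Tε.ExplainsEps lamε ε →
          (∀ (T : PhyloTree L) (lam : T.V → Finset N),
            T.ExplainsEps lam ε → PhyloTree.LeLabeled Tε lamε T lam) →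
          IsHierarchy (Tδ.clusters ∪ Tε.clusters)) := by
  constructor
  · rintro ⟨T, t, lam, hδ, hε⟩
    refine ⟨⟨T, t, hδ⟩, ⟨T, lam, hε⟩, fun Tδ tδ Tε lamε hδ' hdisc _ hleast => ?_⟩
    have hsub : Tδ.clusters ∪ Tε.clusters ⊆ T.clusters :=
      Set.union_subset (PhyloTree.clusters_subset_of_discriminating hδ' hdisc hδ)
        (hleast T lam hε).1
    exact PhyloTree.isHierarchy_of_subset_clusters hsub
      (Or.inl ⟨Tδ.root, PhyloTree.cluster_root⟩)
      fun x => Or.inl ⟨Tδ.leaf x, PhyloTree.cluster_leaf x⟩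
  · rintro ⟨⟨T₁, t₁, hδ⟩, ⟨T₂, lam₂, hε⟩, hyp⟩
    have := T₁.finite_leaves
    let _ : Fintype L := Fintype.ofFinite L
    obtain ⟨Tδ, tδ, hTδ, hdisc⟩ := PhyloTree.exists_discriminating hδ
    obtain ⟨Tε, lamε, hTε, hleast⟩ := PhyloTree.exists_leastResolved hε
    have hH := hyp Tδ tδ Tε lamε hTδ hdisc hTε hleast
    refine ⟨PhyloTree.ofHierarchy _ hH, _, _, hTδ.of_clusters_subset ?_,
      PhyloTree.explainsEps_fitchLabel hε fun k y => ?_⟩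
    · rw [PhyloTree.ofHierarchy_clusters]
      exact Set.subset_union_left
    · rw [PhyloTree.ofHierarchy_clusters]
      exact Or.inr (PhyloTree.fitchCluster_mem_clusters hTε k y)
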